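/- Rely/guarantee rule for sequential composition: let G be a reflexive state relation and assume (1) ρ ⊨ {R,P} p {S,G}; (2) ρ ⊨ {R,S} q {Q,G}; (3) if q = skip then R '' Q ⊆ Q. Then ρ ⊨ {R,P} p ; q {Q,G}. -/

import Mathlib

inductive Lang (α : Type) : Type
  | skip : Lang α
  | basic : (α → α) → Lang α
  | cjump : (α → Prop) → ℕ → Lang α → Lang α
  | while : (α → Prop) → Lang α → Lang α → Lang α
  | ite : (α → Prop) → Lang α → Lang α → Lang α
  | seq : Lang α → Lang α → Lang α
  | par : List (Lang α) → Lang α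
  | await : (α → Prop) → Lang α → Lang α

inductive PStep {α : Type} (ρ : ℕ → Lang α) : Lang α × α → Lang α × α → Prop
  | basic {f : α → α} {σ : α} : PStep ρ (Lang.basic f, σ) (Lang.skip, f σ)
  | cjumpT {C : α → Prop} {i : ℕ} {p : Lang α} {σ : α} (h : C σ) :
      PStep ρ (Lang.cjump C i p, σ) (ρ i, σ)
  | cjumpF {C : α → Prop} {i : ℕ} {p : Lang α} {σ : α} (h : ¬ C σ) :
      PStep ρ (Lang.cjump C i p, σ) (p, σ)
  | await {C : α → Prop} {p : Lang α} {σ σ' : α} (h : C σ)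
      (n : ℕ) (f : ℕ → Lang α × α)
      (h0 : f 0 = (p, σ)) (hn : f n = (Lang.skip, σ'))
      (hstep : ∀ i, i < n → PStep ρ (f i) (f (i + 1))) :
      PStep ρ (Lang.await C p, σ) (Lang.skip, σ')
  | iteT {C : α → Prop} {p₁ p₂ : Lang α} {σ : α} (h : C σ) :
      PStep ρ (Lang.ite C p₁ p₂, σ) (p₁, σ)
  | iteF {C : α → Prop} {p₁ p₂ : Lang α} {σ : α} (h : ¬ C σ) :
      PStep ρ (Lang.ite C p₁ p₂, σ) (p₂, σ)
  | whileT {C : α → Prop} {p₁ p₂ : Lang α} {σ : α} (h : C σ) :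
      PStep ρ (Lang.while C p₁ p₂, σ)
        (Lang.seq p₁ (Lang.seq Lang.skip (Lang.while C p₁ p₂)), σ)
  | whileF {C : α → Prop} {p₁ p₂ : Lang α} {σ : α} (h : ¬ C σ) :
      PStep ρ (Lang.while C p₁ p₂, σ) (p₂, σ)
  | seq {p₁ p₁' p₂ : Lang α} {σ σ' : α} (h : PStep ρ (p₁, σ) (p₁', σ')) :
      PStep ρ (Lang.seq p₁ p₂, σ) (Lang.seq p₁' p₂, σ')
  | seqSkip {p : Lang α} {σ : α} : PStep ρ (Lang.seq Lang.skip p, σ) (p, σ)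
  | par {ps : List (Lang α)} {i : ℕ} {p' : Lang α} {σ σ' : α}
      (hi : i < ps.length) (h : PStep ρ (ps.get ⟨i, hi⟩, σ) (p', σ')) :
      PStep ρ (Lang.par ps, σ) (Lang.par (ps.set i p'), σ')
  | parSkip {ps : List (Lang α)} {σ : α} (hne : ps ≠ [])
      (h : ∀ p ∈ ps, p = Lang.skip) :
      PStep ρ (Lang.par ps, σ) (Lang.skip, σ)

def IsSimulation {α β : Type} (ρ : ℕ → Lang α) (ρ' : ℕ → Lang β)
    (r : α → β → Prop) (X : Lang α → Lang β → Prop) : Prop :=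
  (∀ p q σ₁ σ₂ q' σ₂', X p q → r σ₁ σ₂ → PStep ρ' (q, σ₂) (q', σ₂') →
      ∃ p' σ₁', PStep ρ (p, σ₁) (p', σ₁') ∧ X p' q' ∧ r σ₁' σ₂') ∧
  (∀ q, X Lang.skip q → q = Lang.skip) ∧
  (∀ p, X p Lang.skip → p = Lang.skip)

def Corr {α β : Type} (ρ : ℕ → Lang α) (p : Lang α) (r : α → β → Prop)
    (ρ' : ℕ → Lang β) (q : Lang β) : Prop :=
  ∃ X, IsSimulation ρ ρ' r X ∧ X p q

def MutCorr {α β : Type} (ρ : ℕ → Lang α) (p : Lang α) (r : α → β → Prop)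
    (ρ' : ℕ → Lang β) (q : Lang β) : Prop :=
  Corr ρ p r ρ' q ∧ Corr ρ' q (fun b a => r a b) ρ p

/-- A finite potential computation of (ρ, p): a nonempty sequence of `n`
configurations `c 0, …, c (n-1)`, where the step from `c i` to `c (i+1)` is
an environment step when `e i = true` (program part unchanged) and a program
step otherwise. -/
def IsComp {α : Type} (ρ : ℕ → Lang α) (p : Lang α)
    (n : ℕ) (c : ℕ → Lang α × α) (e : ℕ → Bool) : Prop :=
  0 < n ∧ (c 0).1 = p ∧
  ∀ i, i + 1 < n →
    (e i = true → (c (i + 1)).1 = (c i).1) ∧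
    (e i = false → PStep ρ (c i) (c (i + 1)))

/-- Environment condition E(R). -/
def EnvC {α : Type} (R : α → α → Prop) (n : ℕ)
    (c : ℕ → Lang α × α) (e : ℕ → Bool) : Prop :=
  ∀ i, i + 1 < n → e i = true → R (c i).2 (c (i + 1)).2

/-- Program condition Pr(G). -/
def ProgC {α : Type} (G : α → α → Prop) (n : ℕ)
    (c : ℕ → Lang α × α) (e : ℕ → Bool) : Prop :=
  ∀ i, i + 1 < n → e i = false → G (c i).2 (c (i + 1)).2

/-- Output condition Out(Q): the state of the first skip-configuration
(if any) satisfies Q. -/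
def OutC {α : Type} (Q : α → Prop) (n : ℕ) (c : ℕ → Lang α × α) : Prop :=
  ∀ i, i < n → (c i).1 = Lang.skip → (∀ j, j < i → (c j).1 ≠ Lang.skip) →
    Q (c i).2

/-- Extended Hoare triple over finite potential computations:
ρ ⊨ {R,P} p {Q,G}. -/
def HoareValid {α : Type} (ρ : ℕ → Lang α) (R : α → α → Prop) (P : α → Prop)
    (p : Lang α) (Q : α → Prop) (G : α → α → Prop) : Prop :=
  ∀ n c e, IsComp ρ p n c e → EnvC R n c e → P (c 0).2 →
    OutC Q n c ∧ ProgC G n c e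

/-!
A computation of `p ; q` first runs `p` inside the context `_ ; q`; projecting to the left
component gives a computation of `p`, so the guarantee holds there and the state is in `S`
when the left component first becomes `skip`. From then on the configuration is `skip ; q`,
which idles under environment steps until the step `skip ; q → q`. Deleting that stuttering
step and replacing `skip ; q` by `q` yields a computation of `q` starting in `S`, to which the
second triple applies. If `q = skip`, the output of that computation is its very first state,
so `Q` must be carried across the environment steps taken while idling: this is the stability
hypothesis on `Q`.
-/

namespace Lang

variable {α : Type}

theorem seq_ne_right (a q : Lang α) : seq a q ≠ q := by
  intro h
  have := congrArg sizeOf h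
  simp at this

def seqLeft : Lang α → Lang α
  | seq a _ => a
  | _ => skip

end Lang

namespace PStep

variable {α : Type} {ρ : ℕ → Lang α}

theorem not_skip {σ : α} {t : Lang α × α} : ¬ PStep ρ (Lang.skip, σ) t := nofun

theorem seq_cases {a b x : Lang α} {σ σ' : α} (h : PStep ρ (Lang.seq a b, σ) (x, σ')) :
    (∃ a', x = Lang.seq a' b ∧ PStep ρ (a, σ) (a', σ')) ∨
      (a = Lang.skip ∧ x = b ∧ σ' = σ) := by
  cases h with
  | seq h => exact .inl ⟨_, rfl, h⟩
  | seqSkip => exact .inr ⟨rfl, rfl, rfl⟩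

theorem eq_of_skip_seq {q x : Lang α} {σ σ' : α}
    (h : PStep ρ (Lang.seq Lang.skip q, σ) (x, σ')) : x = q ∧ σ' = σ := by
  rcases seq_cases h with ⟨_, _, h⟩ | ⟨_, hx, hσ⟩
  · exact absurd h not_skip
  · exact ⟨hx, hσ⟩

end PStep

def Nat.succAbove (t i : ℕ) : ℕ := if i < t then i else i + 1

section Computations

variable {α : Type} {ρ : ℕ → Lang α} {R G : α → α → Prop} {Q : α → Prop} {p : Lang α}
  {n : ℕ} {c : ℕ → Lang α × α} {e : ℕ → Bool}

theorem IsComp.take (h : IsComp ρ p n c e) {m : ℕ} (hm : 0 < m) (hmn : m ≤ n) :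
    IsComp ρ p m c e :=
  ⟨hm, h.2.1, fun i hi => h.2.2 i (by omega)⟩

theorem EnvC.take (h : EnvC R n c e) {m : ℕ} (hmn : m ≤ n) : EnvC R m c e :=
  fun i hi => h i (by omega)

theorem IsComp.drop (h : IsComp ρ p n c e) {j : ℕ} (hj : j < n) :
    IsComp ρ (c j).1 (n - j) (fun i => c (j + i)) (fun i => e (j + i)) :=
  ⟨by omega, rfl, fun i hi => h.2.2 (j + i) (by omega)⟩

theorem EnvC.drop (h : EnvC R n c e) (j : ℕ) :
    EnvC R (n - j) (fun i => c (j + i)) (fun i => e (j + i)) :=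
  fun i hi => h (j + i) (by omega)

theorem ProgC.of_take_drop {j : ℕ} (h₁ : ProgC G (j + 1) c e)
    (h₂ : ProgC G (n - j) (fun i => c (j + i)) (fun i => e (j + i))) : ProgC G n c e := by
  intro i hi he
  by_cases hij : i < j
  · exact h₁ i (by omega) he
  · have := h₂ (i - j) (by omega) (by simpa [show j + (i - j) = i by omega] using he)
    simpa [show j + (i - j) = i by omega, show j + (i - j + 1) = i + 1 by omega] using this

theorem OutC.of_drop {j : ℕ} (hj : ∀ i < j, (c i).1 ≠ Lang.skip)
    (h : OutC Q (n - j) (fun i => c (j + i))) : OutC Q n c := by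
  intro i hi hskip hfirst
  have hji : j ≤ i := by
    by_contra hij
    exact hj i (by omega) hskip
  have := h (i - j) (by omega) (by simpa [show j + (i - j) = i by omega] using hskip)
    fun s hs => hfirst (j + s) (by omega)
  simpa [show j + (i - j) = i by omega] using this

/-- As far as states are concerned, `c'` is `c` with its `t`-th step deleted. -/
def DeletesStep (t : ℕ) (c c' : ℕ → Lang α × α) : Prop :=
  ∀ i, (c' i).2 = (c (t.succAbove i)).2 ∧ (c' (i + 1)).2 = (c (t.succAbove i + 1)).2

theorem EnvC.of_deletesStep {t : ℕ} {c' : ℕ → Lang α × α} (hc' : DeletesStep t c c')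
    (h : EnvC R n c e) : EnvC R (n - 1) c' (fun i => e (t.succAbove i)) := by
  intro i hi he
  rw [(hc' i).1, (hc' i).2]
  exact h _ (by unfold Nat.succAbove; split_ifs <;> omega) he

theorem ProgC.of_deletesStep {t : ℕ} {c' : ℕ → Lang α × α} (hc' : DeletesStep t c c')
    (htn : t + 1 < n) (ht : G (c t).2 (c (t + 1)).2)
    (h : ProgC G (n - 1) c' (fun i => e (t.succAbove i))) :
    ProgC G n c e := by
  intro s hs he
  rcases lt_trichotomy s t with hst | rfl | hts
  · have hi : t.succAbove s = s := if_pos hst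
    have := h s (by omega) (by simpa [hi] using he)
    rwa [(hc' s).1, (hc' s).2, hi] at this
  · exact ht
  · have hi : t.succAbove (s - 1) = s := by
      rw [Nat.succAbove, if_neg (by omega)]
      omega
    have := h (s - 1) (by omega) (by simpa [hi] using he)
    rwa [(hc' (s - 1)).1, (hc' (s - 1)).2, hi] at this

theorem EnvC.stable (hQ : ∀ σ σ', Q σ → R σ σ' → Q σ') (h : EnvC R n c e) {m : ℕ}
    (hm : m < n) (henv : ∀ i < m, e i = true) (h0 : Q (c 0).2) : Q (c m).2 := by
  induction m with
  | zero => exact h0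
  | succ m ih =>
    exact hQ _ _ (ih (by omega) fun i hi => henv i (by omega)) (h m hm (henv m m.lt_succ_self))

end Computations

section SeqRule

variable {α : Type} {ρ : ℕ → Lang α} {R G : α → α → Prop} {S Q : α → Prop} {p q : Lang α}
  {n : ℕ} {c : ℕ → Lang α × α} {e : ℕ → Bool}

theorem IsComp.seq_form (hc : IsComp ρ (Lang.seq p q) n c e) {i : ℕ} (hi : i < n)
    (hleft : ∀ s < i, (c s).1.seqLeft ≠ Lang.skip) : ∃ a, (c i).1 = Lang.seq a q := by
  induction i with
  | zero => exact ⟨p, hc.2.1⟩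
  | succ i ih =>
    obtain ⟨a, ha⟩ := ih (by omega) fun s hs => hleft s (by omega)
    cases he : e i
    · have hstep : PStep ρ (Lang.seq a q, (c i).2) ((c (i + 1)).1, (c (i + 1)).2) := by
        rw [← ha]; exact (hc.2.2 i hi).2 he
      rcases PStep.seq_cases hstep with ⟨a', hx, -⟩ | ⟨rfl, -, -⟩
      · exact ⟨a', hx⟩
      · exact absurd (by rw [ha]; rfl) (hleft i i.lt_succ_self)
    · exact ⟨a, ((hc.2.2 i hi).1 he).trans ha⟩

theorem IsComp.seqLeft (hc : IsComp ρ (Lang.seq p q) n c e)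
    (hform : ∀ i < n, ∃ a, (c i).1 = Lang.seq a q) :
    IsComp ρ p n (fun i => ((c i).1.seqLeft, (c i).2)) e := by
  refine ⟨hc.1, by simp only [hc.2.1, Lang.seqLeft], fun i hi => ?_⟩
  obtain ⟨a, ha⟩ := hform i (by omega)
  obtain ⟨b, hb⟩ := hform (i + 1) hi
  simp only [ha, hb, Lang.seqLeft]
  refine ⟨fun he => ?_, fun he => ?_⟩
  · have := (hc.2.2 i hi).1 he
    rw [ha, hb] at this
    exact (Lang.seq.inj this).1
  · have hstep : PStep ρ (Lang.seq a q, (c i).2) (Lang.seq b q, (c (i + 1)).2) := by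
      rw [← ha, ← hb]; exact (hc.2.2 i hi).2 he
    rcases PStep.seq_cases hstep with ⟨a', hx, hstep⟩ | ⟨-, hx, -⟩
    · rwa [(Lang.seq.inj hx).1]
    · exact absurd hx (Lang.seq_ne_right b q)

theorem IsComp.step_of_skip_seq (hc : IsComp ρ p n c e) {i : ℕ} (hi : i + 1 < n)
    (h₀ : (c i).1 = Lang.seq Lang.skip q) :
    e i = true ∧ (c (i + 1)).1 = Lang.seq Lang.skip q ∨
      e i = false ∧ (c (i + 1)).1 = q ∧ (c (i + 1)).2 = (c i).2 := by
  cases he : e i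
  · have hstep : PStep ρ (Lang.seq Lang.skip q, (c i).2) ((c (i + 1)).1, (c (i + 1)).2) := by
      rw [← h₀]; exact (hc.2.2 i hi).2 he
    exact .inr ⟨rfl, PStep.eq_of_skip_seq hstep⟩
  · exact .inl ⟨rfl, ((hc.2.2 i hi).1 he).trans h₀⟩

/-- The computation of `q` inside a computation `d` of `skip ; q` that idles until time `t`
and then takes the step `skip ; q → q`. -/
def stripSkipSeq (q : Lang α) (t : ℕ) (d : ℕ → Lang α × α) : ℕ → Lang α × α :=
  fun i => if i ≤ t then (q, (d i).2) else d (i + 1)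

section StripSkipSeq

variable {t : ℕ} {d : ℕ → Lang α × α} (hqt : (d (t + 1)).1 = q)
  (hσt : (d (t + 1)).2 = (d t).2)
include hqt hσt

theorem stripSkipSeq_of_le {i : ℕ} (hi : t ≤ i) : stripSkipSeq q t d i = d (i + 1) := by
  by_cases hit : i ≤ t
  · obtain rfl : i = t := by omega
    simp only [stripSkipSeq, if_pos hit]
    exact Prod.ext hqt.symm hσt.symm
  · simp only [stripSkipSeq, if_neg hit]

theorem deletesStep_stripSkipSeq : DeletesStep t d (stripSkipSeq q t d) := by
  intro i
  unfold Nat.succAbove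
  by_cases hit : i < t
  · simp [stripSkipSeq, hit, Nat.le_of_lt hit, Nat.succ_le_of_lt hit]
  · rw [if_neg hit, stripSkipSeq_of_le hqt hσt (by omega),
      stripSkipSeq_of_le hqt hσt (by omega : t ≤ i + 1)]
    exact ⟨rfl, rfl⟩

theorem IsComp.stripSkipSeq (hd : IsComp ρ p n d e) (hidle : ∀ i < t, e i = true)
    (ht : t + 1 < n) :
    IsComp ρ q (n - 1) (stripSkipSeq q t d) (fun i => e (t.succAbove i)) := by
  refine ⟨by omega, by simp [_root_.stripSkipSeq], fun i hi => ?_⟩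
  by_cases hit : i < t
  · have he : e (t.succAbove i) = true := by
      simpa only [Nat.succAbove, if_pos hit] using hidle i hit
    simp [_root_.stripSkipSeq, he, Nat.le_of_lt hit, Nat.succ_le_of_lt hit]
  · simp only [Nat.succAbove, if_neg hit, stripSkipSeq_of_le hqt hσt (by omega : t ≤ i),
      stripSkipSeq_of_le hqt hσt (by omega : t ≤ i + 1)]
    exact hd.2.2 (i + 1) (by omega)

theorem OutC.of_stripSkipSeq (hne : ∀ i ≤ t, (d i).1 ≠ Lang.skip)
    (hQ : q = Lang.skip → ∀ σ σ', Q σ → R σ σ' → Q σ') (henv : EnvC R n d e)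
    (hidle : ∀ i < t, e i = true) (ht : t + 1 < n) (hout : OutC Q (n - 1) (stripSkipSeq q t d)) :
    OutC Q n d := by
  intro s hs hskip hfirst
  have hts : t + 1 ≤ s := by
    by_contra h
    exact hne s (by omega) hskip
  by_cases hq : q = Lang.skip
  · obtain rfl : s = t + 1 := by
      by_contra h
      exact hfirst (t + 1) (by omega) (hqt.trans hq)
    have hQ₀ : Q (d 0).2 := by
      simpa [stripSkipSeq] using hout 0 (by omega) (by simpa [stripSkipSeq] using hq) nofun
    rw [hσt]
    exact henv.stable (hQ hq) (by omega) hidle hQ₀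
  · have hs' : s - 1 + 1 = s := by omega
    have := hout (s - 1) (by omega) (by rwa [stripSkipSeq_of_le hqt hσt (by omega), hs'])
      fun j hj => by
        by_cases hjt : j ≤ t
        · simpa [stripSkipSeq, hjt] using hq
        · rw [stripSkipSeq_of_le hqt hσt (by omega)]; exact hfirst (j + 1) (by omega)
    rwa [stripSkipSeq_of_le hqt hσt (by omega), hs'] at this

end StripSkipSeq

theorem HoareValid.skip_seq (hGrefl : ∀ a, G a a) (h : HoareValid ρ R S q Q G)
    (hQ : q = Lang.skip → ∀ σ σ', Q σ → R σ σ' → Q σ') :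
    HoareValid ρ R S (Lang.seq Lang.skip q) Q G := by
  classical
  intro n d e hd henv hS
  by_cases hexit : ∃ k < n, (d k).1 ≠ Lang.seq Lang.skip q
  swap
  · push Not at hexit
    refine ⟨fun i hi hskip _ => by simp [hexit i hi] at hskip, fun i hi he => ?_⟩
    rcases hd.step_of_skip_seq hi (hexit i (by omega)) with ⟨he', -⟩ | ⟨-, hq, -⟩
    · simp [he'] at he
    · exact absurd ((hexit (i + 1) hi).symm.trans hq) (Lang.seq_ne_right _ q)
  obtain ⟨hkn, hk⟩ := Nat.find_spec hexit
  have hidle : ∀ i < Nat.find hexit, (d i).1 = Lang.seq Lang.skip q := fun i hi =>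
    not_not.1 fun h => Nat.find_min hexit hi ⟨by omega, h⟩
  obtain ⟨t, ht⟩ : ∃ t, Nat.find hexit = t + 1 :=
    Nat.exists_eq_succ_of_ne_zero fun h0 => hk (h0 ▸ hd.2.1)
  rw [ht] at hkn hk hidle
  have henv_idle : ∀ i < t, e i = true := fun i hi => by
    rcases hd.step_of_skip_seq (by omega) (hidle i (by omega)) with ⟨he, -⟩ | ⟨-, hq, -⟩
    · exact he
    · exact absurd ((hidle (i + 1) (by omega)).symm.trans hq) (Lang.seq_ne_right _ q)
  obtain ⟨hqt, hσt⟩ : (d (t + 1)).1 = q ∧ (d (t + 1)).2 = (d t).2 := by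
    rcases hd.step_of_skip_seq hkn (hidle t t.lt_succ_self) with ⟨-, h⟩ | ⟨-, hexit⟩
    · exact absurd h hk
    · exact hexit
  have hdel := deletesStep_stripSkipSeq hqt hσt
  obtain ⟨hout, hprog⟩ := h (n - 1) _ _ (hd.stripSkipSeq hqt hσt henv_idle hkn)
    (henv.of_deletesStep hdel) (by simpa [stripSkipSeq] using hS)
  refine ⟨hout.of_stripSkipSeq hqt hσt (fun i hi => ?_) hQ henv henv_idle hkn,
    hprog.of_deletesStep hdel hkn (hσt ▸ hGrefl _)⟩
  simp [hidle i (by omega)]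

end SeqRule

theorem seq_rule {α : Type} (ρ : ℕ → Lang α)
    (G : α → α → Prop) (hGrefl : ∀ a, G a a)
    (R : α → α → Prop) (P S Q : α → Prop) (p q : Lang α)
    (h1 : HoareValid ρ R P p S G)
    (h2 : HoareValid ρ R S q Q G)
    (h3 : q = Lang.skip → ∀ σ σ', Q σ → R σ σ' → Q σ') :
    HoareValid ρ R P (Lang.seq p q) Q G := by
  classical
  intro n c e hc henv hP
  by_cases hdone : ∃ j < n, (c j).1.seqLeft = Lang.skip
  · obtain ⟨hjn, hj⟩ := Nat.find_spec hdone
    set j := Nat.find hdone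
    have hform : ∀ i < j + 1, ∃ a, (c i).1 = Lang.seq a q := fun i hi =>
      hc.seq_form (by omega) fun s hs h => Nat.find_min hdone (by omega : s < j) ⟨by omega, h⟩
    obtain ⟨hout₁, hprog₁⟩ :=
      h1 (j + 1) _ e ((hc.take (by omega) (by omega)).seqLeft hform) (henv.take (by omega)) hP
    have hcj : (c j).1 = Lang.seq Lang.skip q := by
      obtain ⟨a, ha⟩ := hform j j.lt_succ_self
      rw [ha, show a = Lang.skip by simpa [ha, Lang.seqLeft] using hj]
    have hSj : S (c j).2 :=
      hout₁ j j.lt_succ_self hj fun s hs h => Nat.find_min hdone hs ⟨by omega, h⟩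
    obtain ⟨hout₂, hprog₂⟩ :=
      h2.skip_seq hGrefl h3 (n - j) _ _ (hcj ▸ hc.drop hjn) (henv.drop j) hSj
    refine ⟨hout₂.of_drop fun s hs => ?_, hprog₁.of_take_drop hprog₂⟩
    obtain ⟨a, ha⟩ := hform s (by omega)
    simp [ha]
  · push Not at hdone
    have hform : ∀ i < n, ∃ a, (c i).1 = Lang.seq a q := fun i hi =>
      hc.seq_form hi fun s hs => hdone s (by omega)
    refine ⟨fun i hi hskip _ => ?_, (h1 n _ e (hc.seqLeft hform) henv hP).2⟩
    obtain ⟨a, ha⟩ := hform i hi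
    simp [ha] at hskip
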